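/- Consider the parameterized Bellman setting: finite sets S, A, A† of ℓ1 diameter at most 1; γ ∈ [0, 1); d_r, d_P ≥ 0 with γ d_P / 2 < 1; r̄ : S × A × Δ(A†) → ℝ and P̄ : S × A × Δ(A†) → Δ(S) satisfying |r̄(s, a, π) − r̄(s′, a, π′)| ≤ d_r (‖s − s′‖₁ + ‖π − π′‖₁) and ‖P̄(·|s, a, π) − P̄(·|s′, a, π′)‖₁ ≤ d_P (‖s − s′‖₁ + ‖π − π′‖₁); Q*_π the unique fixed point of (T_π Q)(s) = max_{a} [ r̄(s, a, π) + γ ∑_{s′} Q(s′) P̄(s′|s, a, π) ]; and q_{π, s}(a) = r̄(s, a, π) + γ ∑_{s′} Q*_π(s′) P̄(s′|s, a, π). Let H : Δ(A) → ℝ be ρ-strongly concave with respect to the ℓ1 norm (ρ > 0), and define the regularized best response BR^REG(s, π) = argmax_{μ ∈ Δ(A)} [ ∑_{a ∈ A} μ(a) q_{π, s}(a) + H(μ) ], which is uniquely attained. Then for every s ∈ S and all π₁, π₂ ∈ Δ(A†), ‖BR^REG(s, π₁) − BR^REG(s, π₂)‖₁ ≤ d^REG ‖π₁ − π₂‖₁,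 where d^REG = (d_r / ρ) ( 1 + γ / ((1 − γ)(1 − γ d_P / 2)) + (γ d_P / 2) / (1 − γ d_P / 2) ). -/

import Mathlib

/-- The probability simplex over a finite subset `A` of a type, as functions. -/
def simplexOn {U : Type*} (A : Finset U) : Set (U → ℝ) :=
  {p | (∀ a ∈ A, 0 ≤ p a) ∧ ∑ a ∈ A, p a = 1}

/-- Bellman optimality operator of a discounted MDP with finite state set `S`,
finite action set `A`, reward `rbar` and transition kernel `Pbar`. -/
private lemma sup'_le_sup'_add {α : Type*} (A : Finset α) (hA : A.Nonempty)
    (f g : α → ℝ) (C : ℝ) (h : ∀ a ∈ A, f a ≤ g a + C) :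
    A.sup' hA f ≤ A.sup' hA g + C :=
  Finset.sup'_le _ _ fun a ha => (h a ha).trans (add_le_add_left (Finset.le_sup' g ha) C)

private lemma abs_sup'_sub_sup'_le {α : Type*} (A : Finset α) (hA : A.Nonempty)
    (f g : α → ℝ) (C : ℝ) (h : ∀ a ∈ A, |f a - g a| ≤ C) :
    |A.sup' hA f - A.sup' hA g| ≤ C := by
  rw [abs_sub_le_iff]
  constructor
  · have := sup'_le_sup'_add A hA f g C fun a ha => by
      have := (abs_le.mp (h a ha)).2; linarith
    linarith
  · have := sup'_le_sup'_add A hA g f C fun a ha => by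
      have := (abs_le.mp (h a ha)).1; linarith
    linarith

private lemma weighted_diff_bound {V : Type*} (S : Finset V) (Q P₁ P₂ : V → ℝ) (c B : ℝ)
    (hB : ∀ s ∈ S, |Q s - c| ≤ B)
    (h : ∑ s ∈ S, P₁ s = ∑ s ∈ S, P₂ s) :
    |∑ s ∈ S, Q s * P₁ s - ∑ s ∈ S, Q s * P₂ s| ≤ B * ∑ s ∈ S, |P₁ s - P₂ s| := by
  have key : ∑ s ∈ S, Q s * P₁ s - ∑ s ∈ S, Q s * P₂ s
      = ∑ s ∈ S, (Q s - c) * (P₁ s - P₂ s) := by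
    have e : ∑ s ∈ S, (Q s - c) * (P₁ s - P₂ s)
        = (∑ s ∈ S, Q s * P₁ s - ∑ s ∈ S, Q s * P₂ s)
          - c * (∑ s ∈ S, P₁ s - ∑ s ∈ S, P₂ s) := by
      simp only [sub_mul, mul_sub, Finset.sum_sub_distrib, Finset.mul_sum]
      ring
    rw [e, h]; ring
  rw [key]
  calc |∑ s ∈ S, (Q s - c) * (P₁ s - P₂ s)|
      ≤ ∑ s ∈ S, |(Q s - c) * (P₁ s - P₂ s)| := Finset.abs_sum_le_sum_abs _ _
    _ ≤ ∑ s ∈ S, B * |P₁ s - P₂ s| := by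
        apply Finset.sum_le_sum
        intro s hs
        rw [abs_mul]
        exact mul_le_mul_of_nonneg_right (hB s hs) (abs_nonneg _)
    _ = B * ∑ s ∈ S, |P₁ s - P₂ s| := (Finset.mul_sum _ _ _).symm

private lemma sum_mul_prob_le {V : Type*} (S : Finset V) (f P : V → ℝ) (N : ℝ)
    (hf : ∀ s ∈ S, |f s| ≤ N) (hP : ∀ s ∈ S, 0 ≤ P s) (hP1 : ∑ s ∈ S, P s = 1) :
    |∑ s ∈ S, f s * P s| ≤ N := by
  calc |∑ s ∈ S, f s * P s| ≤ ∑ s ∈ S, |f s * P s| := Finset.abs_sum_le_sum_abs _ _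
    _ ≤ ∑ s ∈ S, N * P s := by
        apply Finset.sum_le_sum
        intro s hs
        rw [abs_mul, abs_of_nonneg (hP s hs)]
        exact mul_le_mul_of_nonneg_right (hf s hs) (hP s hs)
    _ = N := by rw [← Finset.mul_sum, hP1, mul_one]

private lemma gap_aux {W : Type*} (A : Finset W) (ρ : ℝ) (hρ : 0 ≤ ρ) (H : (W → ℝ) → ℝ)
    (hH : ∀ μ ∈ simplexOn A, ∀ ν ∈ simplexOn A, ∀ t : ℝ, 0 ≤ t → t ≤ 1 →
      t * H μ + (1 - t) * H ν + ρ / 2 * t * (1 - t) * (∑ a ∈ A, |μ a - ν a|) ^ 2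
        ≤ H (fun a => t * μ a + (1 - t) * ν a))
    (q : W → ℝ) (μ₁ μ₂ : W → ℝ) (hm₁ : μ₁ ∈ simplexOn A) (hm₂ : μ₂ ∈ simplexOn A)
    (hopt : ∀ μ ∈ simplexOn A, ∑ a ∈ A, μ a * q a + H μ ≤ ∑ a ∈ A, μ₁ a * q a + H μ₁) :
    ∑ a ∈ A, μ₂ a * q a + H μ₂ + ρ / 2 * (∑ a ∈ A, |μ₂ a - μ₁ a|) ^ 2
      ≤ ∑ a ∈ A, μ₁ a * q a + H μ₁ := by
  set D := ∑ a ∈ A, |μ₂ a - μ₁ a| with hD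
  have hD0 : 0 ≤ D := by rw [hD]; exact Finset.sum_nonneg fun _ _ => abs_nonneg _
  have hden : (0:ℝ) < ρ / 2 * D ^ 2 + 1 := by positivity
  apply le_of_forall_pos_le_add
  intro ε hε
  set t := min 1 (ε / (ρ / 2 * D ^ 2 + 1)) with ht_def
  have ht0 : 0 < t := lt_min one_pos (div_pos hε hden)
  have ht1 : t ≤ 1 := min_le_left _ _
  have hν : (fun a => t * μ₂ a + (1 - t) * μ₁ a) ∈ simplexOn A := by
    constructor
    · intro a ha
      have h1 := hm₂.1 a ha; have h2 := hm₁.1 a ha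
      have : (0:ℝ) ≤ 1 - t := by linarith
      positivity
    · show ∑ a ∈ A, (t * μ₂ a + (1 - t) * μ₁ a) = 1
      rw [Finset.sum_add_distrib, ← Finset.mul_sum, ← Finset.mul_sum, hm₂.2, hm₁.2]
      ring
  have hcc := hH μ₂ hm₂ μ₁ hm₁ t ht0.le ht1
  rw [← hD] at hcc
  have hop := hopt _ hν
  have hlin : ∑ a ∈ A, (t * μ₂ a + (1 - t) * μ₁ a) * q a
      = t * ∑ a ∈ A, μ₂ a * q a + (1 - t) * ∑ a ∈ A, μ₁ a * q a := by
    rw [Finset.mul_sum, Finset.mul_sum, ← Finset.sum_add_distrib]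
    exact Finset.sum_congr rfl fun a _ => by ring
  rw [hlin] at hop
  have h1 : t * (∑ a ∈ A, μ₂ a * q a + H μ₂ + ρ / 2 * (1 - t) * D ^ 2)
      ≤ t * (∑ a ∈ A, μ₁ a * q a + H μ₁) := by nlinarith [hcc, hop]
  have h2 := le_of_mul_le_mul_left h1 ht0
  have h3 : ρ / 2 * t * D ^ 2 ≤ ε := by
    have htle : t ≤ ε / (ρ / 2 * D ^ 2 + 1) := min_le_right _ _
    have h4 : t * (ρ / 2 * D ^ 2 + 1) ≤ ε := by
      rw [← le_div_iff₀ hden]; exact htle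
    nlinarith
  linarith

noncomputable def bellman {V W : Type*} [NormedAddCommGroup V] [NormedAddCommGroup W]
    (S : Finset V) (A : Finset W) (hA : A.Nonempty) (γ : ℝ)
    (rbar : V → W → ℝ) (Pbar : V → W → V → ℝ) (Q : V → ℝ) : V → ℝ :=
  fun s => A.sup' hA (fun a => rbar s a + γ * ∑ s' ∈ S, Q s' * Pbar s a s')

set_option maxHeartbeats 1600000 in
/-- Lipschitz continuity of the regularized best response: if the one-step reward is
regularized by a `ρ`-strongly concave `H` (w.r.t. ℓ1) on the simplex `Δ(A)`, then the
regularized best response `BR^REG(s, ·)` is Lipschitz in the opponent's policy with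
constant `d^REG = (d_r/ρ)(1 + γ/((1−γ)(1−γ d_P/2)) + (γ d_P/2)/(1−γ d_P/2))`. -/
theorem regularized_best_response_lipschitz
    {V W U : Type*} [NormedAddCommGroup V] [NormedAddCommGroup W] [NormedAddCommGroup U]
    (S : Finset V) (A : Finset W) (Adag : Finset U)
    (hS : S.Nonempty) (hA : A.Nonempty) (hAdag : Adag.Nonempty)
    (hSdiam : ∀ s₁ ∈ S, ∀ s₂ ∈ S, ‖s₁ - s₂‖ ≤ 1)
    (hAdiam : ∀ a₁ ∈ A, ∀ a₂ ∈ A, ‖a₁ - a₂‖ ≤ 1)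
    (hAdagdiam : ∀ b₁ ∈ Adag, ∀ b₂ ∈ Adag, ‖b₁ - b₂‖ ≤ 1)
    (γ : ℝ) (hγ0 : 0 ≤ γ) (hγ1 : γ < 1)
    (d_r d_P : ℝ) (hdr : 0 ≤ d_r) (hdP : 0 ≤ d_P) (hγdP : γ * d_P / 2 < 1)
    (rbar : V → W → (U → ℝ) → ℝ) (Pbar : V → W → (U → ℝ) → V → ℝ)
    (hr : ∀ a ∈ A, ∀ s₁ ∈ S, ∀ s₂ ∈ S, ∀ π₁ ∈ simplexOn Adag, ∀ π₂ ∈ simplexOn Adag,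
      |rbar s₁ a π₁ - rbar s₂ a π₂|
        ≤ d_r * (‖s₁ - s₂‖ + ∑ b ∈ Adag, |π₁ b - π₂ b|))
    (hPmem : ∀ s ∈ S, ∀ a ∈ A, ∀ π ∈ simplexOn Adag,
      (∀ s' ∈ S, 0 ≤ Pbar s a π s') ∧ ∑ s' ∈ S, Pbar s a π s' = 1)
    (hPlip : ∀ a ∈ A, ∀ s₁ ∈ S, ∀ s₂ ∈ S, ∀ π₁ ∈ simplexOn Adag, ∀ π₂ ∈ simplexOn Adag,
      ∑ s' ∈ S, |Pbar s₁ a π₁ s' - Pbar s₂ a π₂ s'|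
        ≤ d_P * (‖s₁ - s₂‖ + ∑ b ∈ Adag, |π₁ b - π₂ b|))
    (Qstar : (U → ℝ) → V → ℝ)
    (hQ : ∀ π ∈ simplexOn Adag, ∀ s,
      Qstar π s
        = bellman S A hA γ (fun s a => rbar s a π) (fun s a => Pbar s a π)
            (Qstar π) s)
    (ρ : ℝ) (hρ : 0 < ρ) (H : (W → ℝ) → ℝ)
    (hH : ∀ μ ∈ simplexOn A, ∀ ν ∈ simplexOn A, ∀ t : ℝ, 0 ≤ t → t ≤ 1 →
      t * H μ + (1 - t) * H ν
          + ρ / 2 * t * (1 - t) * (∑ a ∈ A, |μ a - ν a|) ^ 2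
        ≤ H (fun a => t * μ a + (1 - t) * ν a))
    (BR : V → (U → ℝ) → (W → ℝ))
    (hBRmem : ∀ s ∈ S, ∀ π ∈ simplexOn Adag, BR s π ∈ simplexOn A)
    (hBRmax : ∀ s ∈ S, ∀ π ∈ simplexOn Adag, ∀ μ ∈ simplexOn A,
      ∑ a ∈ A, μ a * (rbar s a π + γ * ∑ s' ∈ S, Qstar π s' * Pbar s a π s') + H μ
        ≤ ∑ a ∈ A,
            BR s π a * (rbar s a π + γ * ∑ s' ∈ S, Qstar π s' * Pbar s a π s')
          + H (BR s π)) :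
    ∀ s ∈ S, ∀ π₁ ∈ simplexOn Adag, ∀ π₂ ∈ simplexOn Adag,
      ∑ a ∈ A, |BR s π₁ a - BR s π₂ a|
        ≤ (d_r / ρ) * (1 + γ / ((1 - γ) * (1 - γ * d_P / 2))
              + (γ * d_P / 2) / (1 - γ * d_P / 2))
            * ∑ b ∈ Adag, |π₁ b - π₂ b| := by
  intro s hs π₁ hπ₁ π₂ hπ₂
  set c := 1 - γ * d_P / 2 with hc_def
  have hc : 0 < c := by rw [hc_def]; linarith
  have h1γ : 0 < 1 - γ := by linarith
  set Δπ := ∑ b ∈ Adag, |π₁ b - π₂ b| with hΔπ_def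
  clear_value c Δπ
  have hΔπ0 : 0 ≤ Δπ := by rw [hΔπ_def]; exact Finset.sum_nonneg fun _ _ => abs_nonneg _
  have hzero : ∀ π : U → ℝ, ∑ b ∈ Adag, |π b - π b| = 0 := fun π => by simp
  -- Step 1: span bound for Qstar π, in midpoint form
  have hmid_bd : ∀ π ∈ simplexOn Adag, ∃ c₀ : ℝ, ∀ s' ∈ S, |Qstar π s' - c₀| ≤ d_r / c / 2 := by
    intro π hπ
    obtain ⟨s₁, hs₁, e₁⟩ := Finset.exists_mem_eq_sup' hS (Qstar π)
    obtain ⟨s₂, hs₂, e₂⟩ := Finset.exists_mem_eq_inf' hS (Qstar π)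
    have hub : ∀ s' ∈ S, Qstar π s' ≤ Qstar π s₁ := fun s' hs' => by
      rw [← e₁]; exact Finset.le_sup' _ hs'
    have hlb : ∀ s' ∈ S, Qstar π s₂ ≤ Qstar π s' := fun s' hs' => by
      rw [← e₂]; exact Finset.inf'_le _ hs'
    have hM0 : 0 ≤ Qstar π s₁ - Qstar π s₂ := by have := hub s₂ hs₂; linarith
    have hmid : ∀ s' ∈ S, |Qstar π s' - (Qstar π s₁ + Qstar π s₂) / 2|
        ≤ (Qstar π s₁ - Qstar π s₂) / 2 := by
      intro s' hs'
      have h1 := hub s' hs'; have h2 := hlb s' hs'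
      rw [abs_le]; constructor <;> linarith
    have key : Qstar π s₁ ≤ Qstar π s₂
        + (d_r + γ * ((Qstar π s₁ - Qstar π s₂) / 2 * d_P)) := by
      have key2 : bellman S A hA γ (fun s a => rbar s a π) (fun s a => Pbar s a π) (Qstar π) s₁
          ≤ bellman S A hA γ (fun s a => rbar s a π) (fun s a => Pbar s a π) (Qstar π) s₂
            + (d_r + γ * ((Qstar π s₁ - Qstar π s₂) / 2 * d_P)) := by
        simp only [bellman]
        apply sup'_le_sup'_add
        intro a ha
        have hrr := hr a ha s₁ hs₁ s₂ hs₂ π hπ π hπ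
        rw [hzero π, add_zero] at hrr
        have hP := hPlip a ha s₁ hs₁ s₂ hs₂ π hπ π hπ
        rw [hzero π, add_zero] at hP
        have hs12 : ‖s₁ - s₂‖ ≤ 1 := hSdiam s₁ hs₁ s₂ hs₂
        have hsn : 0 ≤ ‖s₁ - s₂‖ := norm_nonneg _
        have hrd : rbar s₁ a π - rbar s₂ a π ≤ d_r := by
          have := (abs_le.mp hrr).2
          nlinarith
        have hPs := weighted_diff_bound S (Qstar π) (Pbar s₁ a π) (Pbar s₂ a π)
            ((Qstar π s₁ + Qstar π s₂) / 2) ((Qstar π s₁ - Qstar π s₂) / 2) hmid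
            (by rw [(hPmem s₁ hs₁ a ha π hπ).2, (hPmem s₂ hs₂ a ha π hπ).2])
        have hQd : ∑ s' ∈ S, Qstar π s' * Pbar s₁ a π s'
            - ∑ s' ∈ S, Qstar π s' * Pbar s₂ a π s'
            ≤ (Qstar π s₁ - Qstar π s₂) / 2 * d_P := by
          have h2 := (abs_le.mp hPs).2
          have h3 : (Qstar π s₁ - Qstar π s₂) / 2 * (∑ s' ∈ S, |Pbar s₁ a π s' - Pbar s₂ a π s'|)
              ≤ (Qstar π s₁ - Qstar π s₂) / 2 * d_P := by
            apply mul_le_mul_of_nonneg_left _ (by linarith)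
            calc ∑ s' ∈ S, |Pbar s₁ a π s' - Pbar s₂ a π s'| ≤ d_P * ‖s₁ - s₂‖ := hP
              _ ≤ d_P := by nlinarith
          linarith
        have h4 := mul_le_mul_of_nonneg_left hQd hγ0
        linarith
      have e1 := hQ π hπ s₁
      have e2 := hQ π hπ s₂
      linarith [key2, e1, e2]
    have hMle : Qstar π s₁ - Qstar π s₂ ≤ d_r / c := by
      rw [le_div_iff₀ hc, hc_def]
      nlinarith [key]
    exact ⟨(Qstar π s₁ + Qstar π s₂) / 2, fun s' hs' => by
      have := hmid s' hs'; linarith⟩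
  obtain ⟨c₁, hc₁⟩ := hmid_bd π₁ hπ₁
  -- Step 2: sup-norm distance between Qstar π₁ and Qstar π₂
  set N := S.sup' hS (fun s' => |Qstar π₁ s' - Qstar π₂ s'|) with hN_def
  clear_value N
  have hNub : ∀ s' ∈ S, |Qstar π₁ s' - Qstar π₂ s'| ≤ N := by
    intro s' hs'; rw [hN_def]; exact Finset.le_sup' (fun s' => |Qstar π₁ s' - Qstar π₂ s'|) hs'
  have hN0 : 0 ≤ N := by
    obtain ⟨s₀, hs₀⟩ := hS
    exact (abs_nonneg _).trans (hNub s₀ hs₀)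
  -- Step 3: the shared per-action estimate
  have key : ∀ s₀ ∈ S, ∀ a ∈ A,
      |(rbar s₀ a π₁ + γ * ∑ s' ∈ S, Qstar π₁ s' * Pbar s₀ a π₁ s')
        - (rbar s₀ a π₂ + γ * ∑ s' ∈ S, Qstar π₂ s' * Pbar s₀ a π₂ s')|
      ≤ d_r * Δπ + γ * (d_r / c / 2 * (d_P * Δπ) + N) := by
    intro s₀ hs₀ a ha
    have hrr := hr a ha s₀ hs₀ s₀ hs₀ π₁ hπ₁ π₂ hπ₂
    rw [sub_self, norm_zero, zero_add, ← hΔπ_def] at hrr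
    have hP := hPlip a ha s₀ hs₀ s₀ hs₀ π₁ hπ₁ π₂ hπ₂
    rw [sub_self, norm_zero, zero_add, ← hΔπ_def] at hP
    have h1 := weighted_diff_bound S (Qstar π₁) (Pbar s₀ a π₁) (Pbar s₀ a π₂) c₁ (d_r / c / 2)
        (fun s' hs' => hc₁ s' hs')
        (by rw [(hPmem s₀ hs₀ a ha π₁ hπ₁).2, (hPmem s₀ hs₀ a ha π₂ hπ₂).2])
    have h1' : |∑ s' ∈ S, Qstar π₁ s' * Pbar s₀ a π₁ s'
          - ∑ s' ∈ S, Qstar π₁ s' * Pbar s₀ a π₂ s'|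
        ≤ d_r / c / 2 * (d_P * Δπ) := by
      refine h1.trans ?_
      exact mul_le_mul_of_nonneg_left hP (by positivity)
    have h2 : |∑ s' ∈ S, Qstar π₁ s' * Pbar s₀ a π₂ s'
          - ∑ s' ∈ S, Qstar π₂ s' * Pbar s₀ a π₂ s'| ≤ N := by
      rw [← Finset.sum_sub_distrib]
      have e : ∀ s' ∈ S, Qstar π₁ s' * Pbar s₀ a π₂ s' - Qstar π₂ s' * Pbar s₀ a π₂ s'
          = (Qstar π₁ s' - Qstar π₂ s') * Pbar s₀ a π₂ s' := fun s' _ => by ring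
      rw [Finset.sum_congr rfl e]
      exact sum_mul_prob_le S _ _ N hNub (hPmem s₀ hs₀ a ha π₂ hπ₂).1
        (hPmem s₀ hs₀ a ha π₂ hπ₂).2
    have e : (rbar s₀ a π₁ + γ * ∑ s' ∈ S, Qstar π₁ s' * Pbar s₀ a π₁ s')
        - (rbar s₀ a π₂ + γ * ∑ s' ∈ S, Qstar π₂ s' * Pbar s₀ a π₂ s')
        = ((rbar s₀ a π₁ - rbar s₀ a π₂)
            + γ * (∑ s' ∈ S, Qstar π₁ s' * Pbar s₀ a π₁ s'
                - ∑ s' ∈ S, Qstar π₁ s' * Pbar s₀ a π₂ s'))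
          + γ * (∑ s' ∈ S, Qstar π₁ s' * Pbar s₀ a π₂ s'
                - ∑ s' ∈ S, Qstar π₂ s' * Pbar s₀ a π₂ s') := by ring
    rw [e]
    have t1 := abs_add_le ((rbar s₀ a π₁ - rbar s₀ a π₂)
        + γ * (∑ s' ∈ S, Qstar π₁ s' * Pbar s₀ a π₁ s'
            - ∑ s' ∈ S, Qstar π₁ s' * Pbar s₀ a π₂ s'))
      (γ * (∑ s' ∈ S, Qstar π₁ s' * Pbar s₀ a π₂ s'
            - ∑ s' ∈ S, Qstar π₂ s' * Pbar s₀ a π₂ s'))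
    have t2 := abs_add_le (rbar s₀ a π₁ - rbar s₀ a π₂)
      (γ * (∑ s' ∈ S, Qstar π₁ s' * Pbar s₀ a π₁ s'
            - ∑ s' ∈ S, Qstar π₁ s' * Pbar s₀ a π₂ s'))
    rw [abs_mul, abs_of_nonneg hγ0] at t1 t2
    have u1 := mul_le_mul_of_nonneg_left h1' hγ0
    have u2 := mul_le_mul_of_nonneg_left h2 hγ0
    nlinarith [t1, t2, u1, u2, hrr]
  -- Step 4: the bound on N
  have hNle : N ≤ d_r * Δπ / ((1 - γ) * c) := by
    obtain ⟨s₀, hs₀, eN⟩ := Finset.exists_mem_eq_sup' hS (fun s' => |Qstar π₁ s' - Qstar π₂ s'|)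
    have hb : |Qstar π₁ s₀ - Qstar π₂ s₀|
        ≤ d_r * Δπ + γ * (d_r / c / 2 * (d_P * Δπ) + N) := by
      rw [hQ π₁ hπ₁ s₀, hQ π₂ hπ₂ s₀]
      simp only [bellman]
      exact abs_sup'_sub_sup'_le A hA _ _ _ (fun a ha => key s₀ hs₀ a ha)
    have hNeq : N = |Qstar π₁ s₀ - Qstar π₂ s₀| := by rw [hN_def, eN]
    rw [hNeq] at hN0 ⊢
    rw [le_div_iff₀ (mul_pos h1γ hc)]
    have h5 := mul_le_mul_of_nonneg_right (hNeq ▸ hb : |Qstar π₁ s₀ - Qstar π₂ s₀|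
        ≤ d_r * Δπ + γ * (d_r / c / 2 * (d_P * Δπ) + |Qstar π₁ s₀ - Qstar π₂ s₀|)) hc.le
    have hprod : γ * (d_r / c / 2 * (d_P * Δπ)) * c = γ * d_P * Δπ * d_r / 2 := by
      field_simp
    have h7 : d_r * Δπ * c + γ * d_P * Δπ * d_r / 2 = d_r * Δπ := by
      rw [hc_def]; ring
    nlinarith [h5, hprod, h7]
  -- Step 5: bound on the q-difference at s
  set B := d_r * Δπ + γ * (d_r / c / 2 * (d_P * Δπ) + d_r * Δπ / ((1 - γ) * c)) with hB_def
  clear_value B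
  have qdiff : ∀ a ∈ A,
      |(rbar s a π₁ + γ * ∑ s' ∈ S, Qstar π₁ s' * Pbar s a π₁ s')
        - (rbar s a π₂ + γ * ∑ s' ∈ S, Qstar π₂ s' * Pbar s a π₂ s')| ≤ B := by
    intro a ha
    have h1 := key s hs a ha
    have h2 := mul_le_mul_of_nonneg_left hNle hγ0
    rw [hB_def]
    nlinarith [h1, h2]
  -- Step 6: strong concavity gap, both directions
  have hm₁ := hBRmem s hs π₁ hπ₁
  have hm₂ := hBRmem s hs π₂ hπ₂
  set D := ∑ a ∈ A, |BR s π₁ a - BR s π₂ a| with hD_def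
  clear_value D
  have hD0 : 0 ≤ D := by rw [hD_def]; exact Finset.sum_nonneg fun _ _ => abs_nonneg _
  have gap₁ : ∑ a ∈ A, BR s π₂ a * (rbar s a π₁ + γ * ∑ s' ∈ S, Qstar π₁ s' * Pbar s a π₁ s')
        + H (BR s π₂)
        + ρ / 2 * (∑ a ∈ A, |BR s π₂ a - BR s π₁ a|) ^ 2
      ≤ ∑ a ∈ A, BR s π₁ a * (rbar s a π₁ + γ * ∑ s' ∈ S, Qstar π₁ s' * Pbar s a π₁ s')
        + H (BR s π₁) :=
    gap_aux A ρ hρ.le H hH (fun a => rbar s a π₁ + γ * ∑ s' ∈ S, Qstar π₁ s' * Pbar s a π₁ s') (BR s π₁) (BR s π₂) hm₁ hm₂ (hBRmax s hs π₁ hπ₁)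
  have gap₂ : ∑ a ∈ A, BR s π₁ a * (rbar s a π₂ + γ * ∑ s' ∈ S, Qstar π₂ s' * Pbar s a π₂ s')
        + H (BR s π₁)
        + ρ / 2 * (∑ a ∈ A, |BR s π₁ a - BR s π₂ a|) ^ 2
      ≤ ∑ a ∈ A, BR s π₂ a * (rbar s a π₂ + γ * ∑ s' ∈ S, Qstar π₂ s' * Pbar s a π₂ s')
        + H (BR s π₂) :=
    gap_aux A ρ hρ.le H hH (fun a => rbar s a π₂ + γ * ∑ s' ∈ S, Qstar π₂ s' * Pbar s a π₂ s') (BR s π₂) (BR s π₁) hm₂ hm₁ (hBRmax s hs π₂ hπ₂)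
  have hDswap : ∑ a ∈ A, |BR s π₂ a - BR s π₁ a| = D := by
    rw [hD_def]; exact Finset.sum_congr rfl fun a _ => abs_sub_comm _ _
  rw [hDswap] at gap₁
  rw [← hD_def] at gap₂
  -- Step 7: combine
  have hexpand : ∑ a ∈ A, (BR s π₁ a - BR s π₂ a)
        * ((rbar s a π₁ + γ * ∑ s' ∈ S, Qstar π₁ s' * Pbar s a π₁ s')
          - (rbar s a π₂ + γ * ∑ s' ∈ S, Qstar π₂ s' * Pbar s a π₂ s'))
      = (∑ a ∈ A, BR s π₁ a * (rbar s a π₁ + γ * ∑ s' ∈ S, Qstar π₁ s' * Pbar s a π₁ s'))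
        - (∑ a ∈ A, BR s π₂ a * (rbar s a π₁ + γ * ∑ s' ∈ S, Qstar π₁ s' * Pbar s a π₁ s'))
        - (∑ a ∈ A, BR s π₁ a * (rbar s a π₂ + γ * ∑ s' ∈ S, Qstar π₂ s' * Pbar s a π₂ s'))
        + (∑ a ∈ A, BR s π₂ a * (rbar s a π₂ + γ * ∑ s' ∈ S, Qstar π₂ s' * Pbar s a π₂ s')) := by
    rw [← Finset.sum_sub_distrib, ← Finset.sum_sub_distrib, ← Finset.sum_add_distrib]
    exact Finset.sum_congr rfl fun a _ => by ring
  have hppt : ∑ a ∈ A, (BR s π₁ a - BR s π₂ a)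
        * ((rbar s a π₁ + γ * ∑ s' ∈ S, Qstar π₁ s' * Pbar s a π₁ s')
          - (rbar s a π₂ + γ * ∑ s' ∈ S, Qstar π₂ s' * Pbar s a π₂ s')) ≤ D * B := by
    calc ∑ a ∈ A, (BR s π₁ a - BR s π₂ a)
          * ((rbar s a π₁ + γ * ∑ s' ∈ S, Qstar π₁ s' * Pbar s a π₁ s')
            - (rbar s a π₂ + γ * ∑ s' ∈ S, Qstar π₂ s' * Pbar s a π₂ s'))
        ≤ ∑ a ∈ A, |BR s π₁ a - BR s π₂ a|
          * |(rbar s a π₁ + γ * ∑ s' ∈ S, Qstar π₁ s' * Pbar s a π₁ s')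
            - (rbar s a π₂ + γ * ∑ s' ∈ S, Qstar π₂ s' * Pbar s a π₂ s')| := by
          apply Finset.sum_le_sum
          intro a ha
          rw [← abs_mul]
          exact le_abs_self _
      _ ≤ ∑ a ∈ A, |BR s π₁ a - BR s π₂ a| * B := by
          apply Finset.sum_le_sum
          intro a ha
          exact mul_le_mul_of_nonneg_left (qdiff a ha) (abs_nonneg _)
      _ = D * B := by rw [hD_def, Finset.sum_mul]
  have hsum : ρ * D ^ 2 ≤ D * B := by
    have := hexpand ▸ hppt
    linarith [gap₁, gap₂]
  -- Step 8: conclude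
  rcases eq_or_lt_of_le hD0 with h | h
  · rw [← h]
    have hbr : 0 ≤ 1 + γ / ((1 - γ) * c) + γ * d_P / 2 / c := by
      have v1 := div_nonneg hγ0 (mul_nonneg h1γ.le hc.le)
      have v2 : 0 ≤ γ * d_P / 2 / c := div_nonneg (by positivity) hc.le
      linarith
    exact mul_nonneg (mul_nonneg (div_nonneg hdr hρ.le) hbr) hΔπ0
  · have h9 : ρ * D ≤ B := by nlinarith [hsum, h]
    have h10 : D ≤ B / ρ := by rw [le_div_iff₀ hρ]; nlinarith
    have hBeq : B / ρ = d_r / ρ * (1 + γ / ((1 - γ) * c) + γ * d_P / 2 / c) * Δπ := by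
      rw [hB_def]
      field_simp
      ring
    linarith [h10, hBeq.le, hBeq.ge]
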